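/- Third-order divergence identity for the score: Let q: ℝ^d → ℝ be positive and three times continuously differentiable, and set f = log q. Then for every y ∈ ℝ^d: ∇·( Δq(y)·∇f(y) − ∇²f(y)∇q(y) ) = ⟨∇²q(y), ∇f(y) ⊗ ∇f(y)⟩ + 2·⟨∇q(y), ∇f(y)⟩·Δf(y) + q(y)·( (Δf(y))² − ⟨∇²f(y), ∇²f(y)⟩ ), where ∇· denotes the divergence of a vector field, ⟨·,·⟩ between matrices is the Frobenius inner product, and ⟨·,·⟩ between vectors is the Euclidean inner product. -/

import Mathlib

/-!
Write `q = exp f`. For any `C³` functions `f, g`, expanding the divergence and using the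
symmetry of the third derivatives of `f` gives
`∇·(Δg ∇f - ∇²f ∇g) = ⟨∇Δg, ∇f⟩ - ⟨∇Δf, ∇g⟩ + Δg Δf - ⟨∇²f, ∇²g⟩`.
For `g = q = exp f` the chain rule gives `∇q = q ∇f`, `∇²q = q (∇²f + ∇f ⊗ ∇f)`,
`Δq = q (Δf + |∇f|²)` and `∇Δq = q ((Δf + |∇f|²) ∇f + ∇Δf + 2 ∇²f ∇f)`. Substituting, the
`∇Δf` terms cancel and both sides of the identity become
`q (2 |∇f|² Δf + |∇f|⁴ + ⟨∇²f ∇f, ∇f⟩ + (Δf)² - ⟨∇²f, ∇²f⟩)`.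
-/

open MeasureTheory Real

noncomputable section

/-- Partial derivative of `h` in coordinate `i`. -/
def pd {d : ℕ} (i : Fin d) (h : (Fin d → ℝ) → ℝ) (y : Fin d → ℝ) : ℝ :=
  fderiv ℝ h y (Pi.single i 1)

/-- Iterated partial derivative along a list of coordinate indices. -/
def pdl {d : ℕ} (l : List (Fin d)) (h : (Fin d → ℝ) → ℝ) : (Fin d → ℝ) → ℝ :=
  l.foldr (fun i acc => pd i acc) h

/-- Gradient vector. -/
def grad {d : ℕ} (h : (Fin d → ℝ) → ℝ) (y : Fin d → ℝ) : Fin d → ℝ :=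
  fun i => pd i h y

/-- Hessian matrix. -/
def hess {d : ℕ} (h : (Fin d → ℝ) → ℝ) (y : Fin d → ℝ) : Matrix (Fin d) (Fin d) ℝ :=
  Matrix.of fun i j => pd i (pd j h) y

/-- Laplacian. -/
def lap {d : ℕ} (h : (Fin d → ℝ) → ℝ) (y : Fin d → ℝ) : ℝ :=
  ∑ i, pd i (pd i h) y

/-- Euclidean norm on `Fin d → ℝ`. -/
def eunorm {d : ℕ} (v : Fin d → ℝ) : ℝ :=
  Real.sqrt (∑ i, v i ^ 2)

/-- Frobenius norm of a matrix. -/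
def fnorm {d : ℕ} (A : Matrix (Fin d) (Fin d) ℝ) : ℝ :=
  Real.sqrt (∑ i, ∑ j, A i j ^ 2)

/-- Sup (ℓ∞) norm on `Fin d → ℝ`. -/
def supnorm {d : ℕ} (v : Fin d → ℝ) : ℝ :=
  ⨆ i, |v i|

/-- Smoothness assumption `S(k)`: `p` is `C^k` and all of its iterated partial
derivatives of order at most `k` are uniformly bounded. -/
def SmoothS {d : ℕ} (k : ℕ) (p : (Fin d → ℝ) → ℝ) : Prop :=
  ContDiff ℝ k p ∧
    ∀ l : List (Fin d), l.length ≤ k → ∃ M : ℝ, ∀ x, |pdl l p x| ≤ M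

/-- The class `M²(ℝ^d)` of 2-smooth test functions. -/
def TestM2 {d : ℕ} (m : (Fin d → ℝ) → ℝ) : Prop :=
  ContDiff ℝ 2 m ∧ (∃ M : ℝ, ∀ y i j, |pd i (pd j m) y| ≤ M) ∧
    Integrable m ∧ Integrable (fun y => supnorm (grad m y))

/-- The class `M³(ℝ^d)` of 3-smooth test functions. -/
def TestM3 {d : ℕ} (m : (Fin d → ℝ) → ℝ) : Prop :=
  ContDiff ℝ 3 m ∧ (∃ M : ℝ, ∀ y i j k, |pd i (pd j (pd k m)) y| ≤ M) ∧
    Integrable m ∧ Integrable (fun y => supnorm (grad m y))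

section Calculus

variable {d : ℕ} {g h : (Fin d → ℝ) → ℝ} {y : Fin d → ℝ}

theorem pd_mul (i : Fin d) (hg : DifferentiableAt ℝ g y) (hh : DifferentiableAt ℝ h y) :
    pd i (fun x => g x * h x) y = pd i g y * h y + g y * pd i h y := by
  simp only [pd, fderiv_fun_mul hg hh, add_apply, smul_apply, smul_eq_mul]
  ring

theorem pd_add (i : Fin d) (hg : DifferentiableAt ℝ g y) (hh : DifferentiableAt ℝ h y) :
    pd i (fun x => g x + h x) y = pd i g y + pd i h y := by
  simp [pd, fderiv_fun_add hg hh]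

theorem pd_sub (i : Fin d) (hg : DifferentiableAt ℝ g y) (hh : DifferentiableAt ℝ h y) :
    pd i (fun x => g x - h x) y = pd i g y - pd i h y := by
  simp [pd, fderiv_fun_sub hg hh]

theorem pd_sum (i : Fin d) {ι : Type*} (s : Finset ι) {F : ι → (Fin d → ℝ) → ℝ}
    (hF : ∀ j ∈ s, DifferentiableAt ℝ (F j) y) :
    pd i (fun x => ∑ j ∈ s, F j x) y = ∑ j ∈ s, pd i (F j) y := by
  simp [pd, fderiv_fun_sum hF]

theorem pd_exp (i : Fin d) (hh : DifferentiableAt ℝ h y) :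
    pd i (fun x => exp (h x)) y = exp (h y) * pd i h y := by
  simp [pd, fderiv_exp hh]

theorem contDiff_pd {m n : WithTop ℕ∞} (hh : ContDiff ℝ n h) (hmn : m + 1 ≤ n) (i : Fin d) :
    ContDiff ℝ m (pd i h) :=
  (hh.fderiv_right hmn).clm_apply contDiff_const

theorem differentiable_pd {n : WithTop ℕ∞} (hh : ContDiff ℝ n h) (hn : 2 ≤ n) (i : Fin d) :
    Differentiable ℝ (pd i h) :=
  (contDiff_pd (m := 1) hh hn i).differentiable one_ne_zero

theorem pd_comm (hh : ContDiff ℝ 2 h) (i j : Fin d) (y : Fin d → ℝ) :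
    pd i (pd j h) y = pd j (pd i h) y := by
  have hdiff : DifferentiableAt ℝ (fderiv ℝ h) y :=
    (hh.fderiv_right (m := 1) (by norm_num)).differentiable one_ne_zero y
  have hsymm : IsSymmSndFDerivAt ℝ h y := hh.contDiffAt.isSymmSndFDerivAt (by simp)
  change fderiv ℝ (fun x => fderiv ℝ h x (Pi.single j 1)) y (Pi.single i 1)
    = fderiv ℝ (fun x => fderiv ℝ h x (Pi.single i 1)) y (Pi.single j 1)
  rw [fderiv_clm_apply hdiff (differentiableAt_const _),
    fderiv_clm_apply hdiff (differentiableAt_const _)]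
  simpa using hsymm (Pi.single i 1) (Pi.single j 1)

end Calculus

open Matrix

section Divergence

variable {d : ℕ} {f g h : (Fin d → ℝ) → ℝ}

theorem differentiable_pd_pd (hh : ContDiff ℝ 3 h) (i j : Fin d) :
    Differentiable ℝ (pd i (pd j h)) :=
  differentiable_pd (contDiff_pd hh (by norm_num) j) le_rfl i

theorem differentiable_lap (hh : ContDiff ℝ 3 h) : Differentiable ℝ (lap h) :=
  Differentiable.fun_sum fun j _ => differentiable_pd_pd hh j j

theorem pd_lap (hh : ContDiff ℝ 3 h) (i : Fin d) (y : Fin d → ℝ) :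
    pd i (lap h) y = ∑ j, pd i (pd j (pd j h)) y :=
  pd_sum i _ fun j _ => (differentiable_pd_pd hh j j).differentiableAt

theorem pd_pd_pd_comm (hh : ContDiff ℝ 3 h) (i j : Fin d) (y : Fin d → ℝ) :
    pd i (pd i (pd j h)) y = pd j (pd i (pd i h)) y := by
  rw [show pd i (pd j h) = pd j (pd i h) from
    funext (pd_comm (hh.of_le (by norm_num)) i j)]
  exact pd_comm (contDiff_pd hh (by norm_num) i) i j y

theorem pd_lap_mul_grad_sub_hess_mulVec (hf : ContDiff ℝ 3 f) (hg : ContDiff ℝ 3 g) (i : Fin d)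
    (y : Fin d → ℝ) :
    pd i (fun x => lap g x * grad f x i - (hess f x).mulVec (grad g x) i) y
      = pd i (lap g) y * pd i f y + lap g y * pd i (pd i f) y
        - ∑ j, (pd i (pd i (pd j f)) y * pd j g y + pd i (pd j f) y * pd i (pd j g) y) := by
  have hgrad_f : Differentiable ℝ (pd i f) := differentiable_pd hf (by norm_num) i
  have hgrad_g (j : Fin d) : Differentiable ℝ (pd j g) := differentiable_pd hg (by norm_num) j
  have hterm (j : Fin d) : DifferentiableAt ℝ (fun x => pd i (pd j f) x * pd j g x) y :=
    (differentiable_pd_pd hf i j y).mul (hgrad_g j y)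
  change pd i (fun x => lap g x * pd i f x - ∑ j, pd i (pd j f) x * pd j g x) y = _
  rw [pd_sub i ((differentiable_lap hg y).fun_mul (hgrad_f y)) (.fun_sum fun j _ => hterm j),
    pd_mul i (differentiable_lap hg y) (hgrad_f y), pd_sum i _ fun j _ => hterm j]
  congr 1
  exact Finset.sum_congr rfl fun j _ =>
    pd_mul i (differentiable_pd_pd hf i j y) (hgrad_g j y)

theorem sum_pd_lap_mul_grad_sub_hess_mulVec (hf : ContDiff ℝ 3 f) (hg : ContDiff ℝ 3 g)
    (y : Fin d → ℝ) :
    ∑ i, pd i (fun x => lap g x * grad f x i - (hess f x).mulVec (grad g x) i) y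
      = grad (lap g) y ⬝ᵥ grad f y - grad (lap f) y ⬝ᵥ grad g y + lap g y * lap f y
        - ∑ i, ∑ j, hess f y i j * hess g y i j := by
  have hthird : ∑ i, ∑ j, pd i (pd i (pd j f)) y * pd j g y = grad (lap f) y ⬝ᵥ grad g y := by
    rw [Finset.sum_comm]
    simp only [grad, dotProduct, pd_lap hf, Finset.sum_mul, pd_pd_pd_comm hf]
  simp only [pd_lap_mul_grad_sub_hess_mulVec hf hg, Finset.sum_sub_distrib,
    Finset.sum_add_distrib, hthird, ← Finset.mul_sum]
  simp only [dotProduct, grad, hess, lap, Matrix.of_apply]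
  ring

end Divergence

section Exponential

variable {d : ℕ} {f q : (Fin d → ℝ) → ℝ}

theorem pd_grad_dotProduct_grad (hf : ContDiff ℝ 2 f) (i : Fin d) (y : Fin d → ℝ) :
    pd i (fun x => grad f x ⬝ᵥ grad f x) y = 2 * (hess f y *ᵥ grad f y) i := by
  have hgrad (j : Fin d) : DifferentiableAt ℝ (pd j f) y := differentiable_pd hf le_rfl j y
  change pd i (fun x => ∑ j, pd j f x * pd j f x) y = _
  rw [pd_sum i _ fun j _ => (hgrad j).fun_mul (hgrad j)]
  simp only [pd_mul i (hgrad _) (hgrad _), mulVec, dotProduct, hess, grad, Matrix.of_apply,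
    Finset.mul_sum]
  exact Finset.sum_congr rfl fun j _ => by ring

theorem pd_eq_mul_pd_of_eq_exp (hq : q = fun x => exp (f x)) (hf : Differentiable ℝ f)
    (i : Fin d) :
    pd i q = fun x => q x * pd i f x := by
  subst hq
  exact funext fun x => pd_exp i (hf x)

theorem grad_eq_smul_of_eq_exp (hq : q = fun x => exp (f x)) (hf : Differentiable ℝ f)
    (y : Fin d → ℝ) :
    grad q y = q y • grad f y := by
  ext i
  simp only [grad, pd_eq_mul_pd_of_eq_exp hq hf, Pi.smul_apply, smul_eq_mul]

theorem hess_eq_smul_of_eq_exp (hq : q = fun x => exp (f x)) (hf : ContDiff ℝ 2 f)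
    (y : Fin d → ℝ) :
    hess q y = q y • (hess f y + vecMulVec (grad f y) (grad f y)) := by
  have hf1 : Differentiable ℝ f := hf.differentiable two_ne_zero
  have hq1 : Differentiable ℝ q := hq ▸ fun x => (hf1 x).exp
  ext i j
  rw [hess, Matrix.of_apply, pd_eq_mul_pd_of_eq_exp hq hf1 j,
    pd_mul i (hq1 y) (differentiable_pd hf le_rfl j y), pd_eq_mul_pd_of_eq_exp hq hf1 i]
  simp only [Matrix.smul_apply, Matrix.add_apply, vecMulVec_apply, hess, grad, Matrix.of_apply,
    smul_eq_mul]
  ring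

theorem lap_eq_of_eq_exp (hq : q = fun x => exp (f x)) (hf : ContDiff ℝ 2 f)
    (y : Fin d → ℝ) :
    lap q y = q y * (lap f y + grad f y ⬝ᵥ grad f y) := by
  change (hess q y).trace = q y * ((hess f y).trace + _)
  rw [hess_eq_smul_of_eq_exp hq hf, Matrix.trace_smul, Matrix.trace_add, Matrix.trace_vecMulVec,
    smul_eq_mul]

theorem grad_lap_eq_smul_of_eq_exp (hq : q = fun x => exp (f x)) (hf : ContDiff ℝ 3 f)
    (y : Fin d → ℝ) :
    grad (lap q) y = q y • ((lap f y + grad f y ⬝ᵥ grad f y) • grad f y + grad (lap f) y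
      + (2 : ℝ) • hess f y *ᵥ grad f y) := by
  have hf2 : ContDiff ℝ 2 f := hf.of_le (by norm_num)
  have hf1 : Differentiable ℝ f := hf.differentiable (by norm_num)
  have hq1 : Differentiable ℝ q := hq ▸ fun x => (hf1 x).exp
  have hgrad_sq : DifferentiableAt ℝ (fun x => grad f x ⬝ᵥ grad f x) y :=
    .fun_sum fun j _ => ((differentiable_pd hf2 le_rfl j).mul (differentiable_pd hf2 le_rfl j)) y
  ext i
  rw [grad, show lap q = fun x => q x * (lap f x + grad f x ⬝ᵥ grad f x) from
      funext (lap_eq_of_eq_exp hq hf2),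
    pd_mul i (hq1 y) ((differentiable_lap hf y).fun_add hgrad_sq),
    pd_add i (differentiable_lap hf y) hgrad_sq, pd_grad_dotProduct_grad hf2,
    pd_eq_mul_pd_of_eq_exp hq hf1]
  simp only [Pi.smul_apply, Pi.add_apply, smul_eq_mul, grad]
  ring

end Exponential

-- `Q, a, H, L, Λ` stand for `q, ∇f, ∇²f, Δf, ∇Δf` at a point, with `q = exp f`.
theorem third_order_divergence_identity_of_jet {d : ℕ} (Q L : ℝ) (a Λ : Fin d → ℝ)
    (H : Matrix (Fin d) (Fin d) ℝ) :
    (Q • ((L + a ⬝ᵥ a) • a + Λ + (2 : ℝ) • H *ᵥ a)) ⬝ᵥ a - Λ ⬝ᵥ (Q • a) + Q * (L + a ⬝ᵥ a) * L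
      - ∑ i, ∑ j, H i j * (Q • (H + vecMulVec a a)) i j
    = (∑ i, ∑ j, (Q • (H + vecMulVec a a)) i j * (a i * a j)) + 2 * ((Q • a) ⬝ᵥ a) * L
      + Q * (L ^ 2 - ∑ i, ∑ j, H i j * H i j) := by
  have hHa : ∑ i, ∑ j, H i j * (a i * a j) = (H *ᵥ a) ⬝ᵥ a := by
    simp only [dotProduct, mulVec, Finset.sum_mul]
    exact Finset.sum_congr rfl fun i _ => Finset.sum_congr rfl fun j _ => by ring
  have haa : ∑ i, ∑ j, a i * a j * (a i * a j) = (a ⬝ᵥ a) ^ 2 := by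
    simp only [dotProduct, sq, Finset.sum_mul_sum]
    exact Finset.sum_congr rfl fun i _ => Finset.sum_congr rfl fun j _ => by ring
  have hHQ : ∑ i, ∑ j, H i j * (Q • (H + vecMulVec a a)) i j
      = Q * ((∑ i, ∑ j, H i j * H i j) + ∑ i, ∑ j, H i j * (a i * a j)) := by
    simp only [Matrix.smul_apply, Matrix.add_apply, vecMulVec_apply, smul_eq_mul, mul_add,
      Finset.mul_sum, ← Finset.sum_add_distrib]
    exact Finset.sum_congr rfl fun i _ => Finset.sum_congr rfl fun j _ => by ring
  have hQa : ∑ i, ∑ j, (Q • (H + vecMulVec a a)) i j * (a i * a j)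
      = Q * ((∑ i, ∑ j, H i j * (a i * a j)) + ∑ i, ∑ j, a i * a j * (a i * a j)) := by
    simp only [Matrix.smul_apply, Matrix.add_apply, vecMulVec_apply, smul_eq_mul, mul_add,
      Finset.mul_sum, ← Finset.sum_add_distrib]
    exact Finset.sum_congr rfl fun i _ => Finset.sum_congr rfl fun j _ => by ring
  rw [hHQ, hQa, hHa, haa]
  simp only [smul_dotProduct, add_dotProduct, dotProduct_smul, smul_eq_mul, dotProduct_comm Λ a]
  ring

theorem third_order_divergence_identity_general
    {d : ℕ} (q : (Fin d → ℝ) → ℝ)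
    (hqpos : ∀ y, 0 < q y) (hq : ContDiff ℝ 3 q)
    (f : (Fin d → ℝ) → ℝ) (hf : f = fun x => Real.log (q x)) (y : Fin d → ℝ) :
    (∑ i, pd i (fun x => lap q x * grad f x i - (hess f x).mulVec (grad q x) i) y) =
      (∑ i, ∑ j, hess q y i j * (grad f y i * grad f y j)) +
        2 * (∑ i, grad q y i * grad f y i) * lap f y +
        q y * ((lap f y) ^ 2 - ∑ i, ∑ j, hess f y i j * hess f y i j) := by
  have hf3 : ContDiff ℝ 3 f := hf ▸ hq.log fun x => (hqpos x).ne'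
  have hf2 : ContDiff ℝ 2 f := hf3.of_le (by norm_num)
  have hq_exp : q = fun x => exp (f x) := by
    subst hf
    exact funext fun x => (exp_log (hqpos x)).symm
  rw [sum_pd_lap_mul_grad_sub_hess_mulVec hf3 hq, grad_lap_eq_smul_of_eq_exp hq_exp hf3,
    grad_eq_smul_of_eq_exp hq_exp (hf2.differentiable two_ne_zero),
    hess_eq_smul_of_eq_exp hq_exp hf2, lap_eq_of_eq_exp hq_exp hf2]
  exact third_order_divergence_identity_of_jet _ _ _ _ _

/-- Third-order divergence identity for the score: for `f = log q`,
`∇·(Δq ∇f - ∇²f ∇q) = ⟨∇²q, ∇f ⊗ ∇f⟩ + 2 ⟨∇q, ∇f⟩ Δf + q ((Δf)² - ⟨∇²f, ∇²f⟩)`. -/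
theorem third_order_divergence_identity
    {d : ℕ} (hd : 0 < d) (q : (Fin d → ℝ) → ℝ)
    (hqpos : ∀ y, 0 < q y) (hq : ContDiff ℝ 3 q)
    (f : (Fin d → ℝ) → ℝ) (hf : f = fun x => Real.log (q x)) (y : Fin d → ℝ) :
    (∑ i, pd i (fun x => lap q x * grad f x i - (hess f x).mulVec (grad q x) i) y) =
      (∑ i, ∑ j, hess q y i j * (grad f y i * grad f y j)) +
        2 * (∑ i, grad q y i * grad f y i) * lap f y +
        q y * ((lap f y) ^ 2 - ∑ i, ∑ j, hess f y i j * hess f y i j) :=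
  third_order_divergence_identity_general q hqpos hq f hf y
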